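/- Let R be an integral domain and G a finite group. Let P be a left R[G]-module which is finitely generated and projective as an R-module, projective as an R[G]-module, and which carries a G-invariant non-degenerate symmetric R-bilinear form. Let V be a left R[G]-module which is finitely generated and projective as an R-module. Then there is an R-module isomorphism Hom_R((V ⊗_R P)^G, R) ≅ (Hom_R(V, R) ⊗_R P)^G, where G acts diagonally on the tensor products and on Hom_R(V, R) by (g•f)(v) = f(g⁻¹•v). -/

import Mathlib

/-!
Since `P` is projective over `R[G]`, Higman's criterion gives an `R`-linear `s : P → P` with
`∑_g g ∘ s ∘ g⁻¹ = 1`, and `1 ⊗ s` does the same for `M = V ⊗ P`. Then `s` splits the norm map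
`M → M^G` on invariants, so dualising identifies `Hom_R(M^G, R)` with `Hom_R(M, R)^G`. Finally
`Hom_R(V ⊗ P, R) ≅ Hom_R(V, P^*) ≅ Hom_R(V, P) ≅ V^* ⊗ P` equivariantly, by currying, by the
invariant form, and because `V` is finitely generated projective.
-/

open scoped TensorProduct

namespace Representation

variable {R G V W U : Type*} [CommRing R] [Group G] [AddCommGroup V] [Module R V]
  [AddCommGroup W] [Module R W] [AddCommGroup U] [Module R U]

theorem mem_dual_invariants_iff (ρ : Representation R G V) (f : Module.Dual R V) :
    f ∈ ρ.dual.invariants ↔ ∀ g, f ∘ₗ ρ g = f := by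
  refine ⟨fun hf g => LinearMap.ext fun v => ?_, fun hf g => hf g⁻¹⟩
  simpa [Module.Dual.transpose_apply] using LinearMap.congr_fun (hf g⁻¹) v

theorem IntertwiningMap.apply_mem_invariants {ρ : Representation R G V}
    {σ : Representation R G W} (f : ρ.IntertwiningMap σ) {v : V} (hv : v ∈ ρ.invariants) :
    f v ∈ σ.invariants := fun g => by
  rw [← f.isIntertwining, hv g]

namespace Equiv

noncomputable def invariantsEquiv {ρ : Representation R G V} {σ : Representation R G W}
    (φ : ρ.Equiv σ) : ρ.invariants ≃ₗ[R] σ.invariants :=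
  .ofLinearMap (φ.toLinearMap.restrict fun _ => φ.toIntertwiningMap.apply_mem_invariants)
    (φ.symm.toLinearMap.restrict fun _ => φ.symm.toIntertwiningMap.apply_mem_invariants)
    (by ext; simp) (by ext; simp)

noncomputable def dualTprod (ρ : Representation R G V) (σ : Representation R G W) :
    (ρ.tprod σ).dual.Equiv (linHom ρ σ.dual) :=
  .mk (TensorProduct.lift.equiv (.id R) V W R).symm fun g => by
    ext f v w
    simp [Module.Dual.transpose_apply]

noncomputable def dualOfInvariantForm (ρ : Representation R G V) (t : V →ₗ[R] V →ₗ[R] R)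
    (ht : ∀ g x y, t (ρ g x) (ρ g y) = t x y) (hnd : Function.Bijective t) : ρ.Equiv ρ.dual :=
  .mk (.ofBijective t hnd) fun g => by
    ext x y
    simpa [Module.Dual.transpose_apply] using ht g x (ρ g⁻¹ y)

noncomputable def linHomCongrRight (ρ : Representation R G V) {σ : Representation R G W}
    {τ : Representation R G U} (φ : σ.Equiv τ) : (linHom ρ σ).Equiv (linHom ρ τ) :=
  .mk φ.toLinearEquiv.congrRight fun g => by
    ext f v
    simp [LinearEquiv.congrRight, φ.toIntertwiningMap.isIntertwining]

noncomputable def dualTensorHomOfProjective (ρ : Representation R G V)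
    (σ : Representation R G W) [Module.Finite R V] [Module.Projective R V] :
    (ρ.dual.tprod σ).Equiv (linHom ρ σ) :=
  .mk (dualTensorHomEquiv R V W) (dualTensorHom_comm ρ σ)

end Equiv

variable [Fintype G]

theorem linHom_norm_apply_apply (ρ : Representation R G V) (s : V →ₗ[R] V) (v : V) :
    (linHom ρ ρ).norm s v = ∑ g, ρ g (s (ρ g⁻¹ v)) := by
  simp [norm, LinearMap.sum_apply]

theorem asAlgebraHom_apply_eq_sum (ρ : Representation R G V) (a : MonoidAlgebra R G) (v : V) :
    ρ.asAlgebraHom a v = ∑ g, a.coeff g • ρ g v := by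
  rw [asAlgebraHom_def, MonoidAlgebra.lift_apply, Finsupp.sum_fintype _ _ (by simp)]
  simp [LinearMap.sum_apply]

theorem exists_linHom_norm_eq_id (ρ : Representation R G V)
    [Module.Projective (MonoidAlgebra R G) ρ.asModule] :
    ∃ s : V →ₗ[R] V, (linHom ρ ρ).norm s = LinearMap.id := by
  obtain ⟨σ, hσ⟩ := Module.projective_def'.1 ‹Module.Projective (MonoidAlgebra R G) ρ.asModule›
  let e := ρ.asModuleEquiv
  let coeffAt (g : G) : MonoidAlgebra R G →ₗ[R] R :=
    Finsupp.lapply g ∘ₗ (MonoidAlgebra.coeffLinearEquiv R).toLinearMap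
  let lc (g : G) : (ρ.asModule →₀ MonoidAlgebra R G) →ₗ[R] V :=
    Finsupp.linearCombination R (fun m => ρ g (e m)) ∘ₗ Finsupp.mapRange.linearMap (coeffAt g)
  have hσρ (g : G) (v : V) :
      σ (e.symm (ρ g v)) = MonoidAlgebra.single g (1 : R) • σ (e.symm v) := by
    rw [← map_smul, asModuleEquiv_symm_map_rho, MonoidAlgebra.of_apply]
  have hlc (g : G) (x) : ρ g (lc 1 (MonoidAlgebra.single g⁻¹ (1 : R) • x)) = lc g x := by
    induction x using Finsupp.induction_linear with
    | zero => simp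
    | add x y hx hy => simp only [smul_add, map_add, hx, hy]
    | single m a =>
      rw [Finsupp.smul_single, smul_eq_mul]
      simp [lc, coeffAt, MonoidAlgebra.coeff_single_mul_apply, -Finsupp.single_mul]
  have hsum (x) : ∑ g, lc g x = e (Finsupp.linearCombination (MonoidAlgebra R G) id x) := by
    induction x using Finsupp.induction_linear with
    | zero => simp
    | add x y hx hy => simp only [map_add, Finset.sum_add_distrib, hx, hy]
    | single m a => simp [lc, coeffAt, asModuleEquiv_map_smul, asAlgebraHom_apply_eq_sum, e]
  -- `s` keeps the coefficient at `1` of the splitting `σ` into a free `R[G]`-module.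
  refine ⟨lc 1 ∘ₗ σ.restrictScalars R ∘ₗ e.symm.toLinearMap, LinearMap.ext fun v => ?_⟩
  rw [linHom_norm_apply_apply]
  simp only [LinearMap.comp_apply, LinearMap.restrictScalars_apply, LinearEquiv.coe_coe, hσρ, hlc,
    hsum, ← LinearMap.comp_apply (Finsupp.linearCombination _ _), hσ, LinearMap.id_apply,
    LinearEquiv.apply_symm_apply]

theorem norm_linHom_lTensor (ρ : Representation R G V) (σ : Representation R G W)
    (f : V →ₗ[R] V) :
    (linHom (σ.tprod ρ) (σ.tprod ρ)).norm (f.lTensor W) = ((linHom ρ ρ).norm f).lTensor W := by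
  rw [← LinearMap.coe_lTensorHom]
  simp only [norm, LinearMap.sum_apply, map_sum]
  refine Finset.sum_congr rfl fun g _ => ?_
  ext
  simp

noncomputable def normInvariants (ρ : Representation R G V) : V →ₗ[R] ρ.invariants :=
  ρ.norm.codRestrict _ fun v g => ρ.self_norm_apply g v

@[simp]
theorem coe_normInvariants (ρ : Representation R G V) (v : V) :
    (ρ.normInvariants v : V) = ρ.norm v :=
  rfl

theorem normInvariants_self_apply (ρ : Representation R G V) (g : G) (v : V) :
    ρ.normInvariants (ρ g v) = ρ.normInvariants v :=
  Subtype.ext (ρ.norm_self_apply g v)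

variable {ρ : Representation R G V} {s : V →ₗ[R] V}

theorem norm_apply_of_mem_invariants (hs : (linHom ρ ρ).norm s = LinearMap.id) {v : V}
    (hv : v ∈ ρ.invariants) : ρ.norm (s v) = v := by
  conv_rhs => rw [← LinearMap.id_apply (R := R) v, ← hs, linHom_norm_apply_apply]
  simp [norm, LinearMap.sum_apply, hv _]

theorem apply_norm_of_mem_dual_invariants (hs : (linHom ρ ρ).norm s = LinearMap.id)
    {f : Module.Dual R V} (hf : f ∈ ρ.dual.invariants) (v : V) : f (s (ρ.norm v)) = f v := by
  have hfρ (g : G) (w : V) : f (ρ g w) = f w :=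
    LinearMap.congr_fun ((ρ.mem_dual_invariants_iff f).1 hf g) w
  calc f (s (ρ.norm v)) = ∑ g, f (s (ρ g v)) := by simp [norm, LinearMap.sum_apply]
    _ = ∑ g, f (s (ρ g⁻¹ v)) := (Equiv.sum_comp (Equiv.inv G) fun g => f (s (ρ g v))).symm
    _ = f v := by
      conv_rhs => rw [← LinearMap.id_apply (R := R) v, ← hs, linHom_norm_apply_apply, map_sum]
      simp [hfρ]

noncomputable def dualInvariantsEquiv (ρ : Representation R G V) (s : V →ₗ[R] V)
    (hs : (linHom ρ ρ).norm s = LinearMap.id) :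
    Module.Dual R ρ.invariants ≃ₗ[R] ρ.dual.invariants :=
  .ofLinearMap
    (ρ.normInvariants.dualMap.codRestrict _ fun ψ => (ρ.mem_dual_invariants_iff _).2 fun g => by
      ext v
      simp [normInvariants_self_apply])
    ((s ∘ₗ ρ.invariants.subtype).dualMap ∘ₗ ρ.dual.invariants.subtype)
    (by
      ext ⟨f, hf⟩ v
      simpa using apply_norm_of_mem_dual_invariants hs hf v)
    (by
      ext ψ ⟨v, hv⟩
      exact congrArg ψ (Subtype.ext (norm_apply_of_mem_invariants hs hv)))

end Representation

theorem dual_of_twist_equiv_twist_of_dual_general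
    {R : Type*} [CommRing R]
    {G : Type*} [Group G] [Fintype G]
    {P : Type*} [AddCommGroup P] [Module R P]
    {V : Type*} [AddCommGroup V] [Module R V]
    (ρP : Representation R G P) (ρV : Representation R G V)
    (hPprojG : Module.Projective (MonoidAlgebra R G) ρP.asModule)
    (t : P →ₗ[R] P →ₗ[R] R)
    (htG : ∀ (g : G) (x y : P), t (ρP g x) (ρP g y) = t x y)
    (htnd : Function.Bijective t)
    (hVfin : Module.Finite R V) (hVproj : Module.Projective R V) :
    Nonempty (Module.Dual R ((ρV.tprod ρP).invariants) ≃ₗ[R]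
      (Representation.invariants (V := Module.Dual R V ⊗[R] P) (ρV.dual.tprod ρP))) := by
  obtain ⟨s, hs⟩ := ρP.exists_linHom_norm_eq_id
  have hsV : (Representation.linHom (ρV.tprod ρP) (ρV.tprod ρP)).norm (s.lTensor V) =
      LinearMap.id := by
    rw [Representation.norm_linHom_lTensor, hs, LinearMap.lTensor_id]
  let φ : (ρV.tprod ρP).dual.Equiv (ρV.dual.tprod ρP) :=
    (Representation.Equiv.dualTprod ρV ρP).trans <|
      (Representation.Equiv.linHomCongrRight ρV
        (Representation.Equiv.dualOfInvariantForm ρP t htG htnd).symm).trans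
      (Representation.Equiv.dualTensorHomOfProjective ρV ρP).symm
  exact ⟨(ρV.tprod ρP).dualInvariantsEquiv _ hsV ≪≫ₗ φ.invariantsEquiv⟩

/-- Let `R` be an integral domain, `G` a finite group, `P` an `R[G]`-module which
is finitely generated projective over `R`, projective over `R[G]`, and carries a `G`-invariant
non-degenerate symmetric bilinear form; let `V` be an `R[G]`-module, finitely generated
projective over `R`.  Then `Hom_R((V ⊗_R P)^G, R) ≅ (Hom_R(V, R) ⊗_R P)^G` as `R`-modules,
where `G` acts diagonally on the tensor products and contragradiently on `Hom_R(V, R)`. -/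
theorem dual_of_twist_equiv_twist_of_dual
    {R : Type*} [CommRing R] [IsDomain R]
    {G : Type*} [Group G] [Fintype G]
    {P : Type*} [AddCommGroup P] [Module R P]
    {V : Type*} [AddCommGroup V] [Module R V]
    (ρP : Representation R G P) (ρV : Representation R G V)
    (hPfin : Module.Finite R P) (hPproj : Module.Projective R P)
    (hPprojG : Module.Projective (MonoidAlgebra R G) ρP.asModule)
    (t : P →ₗ[R] P →ₗ[R] R)
    (htsymm : ∀ x y : P, t x y = t y x)
    (htG : ∀ (g : G) (x y : P), t (ρP g x) (ρP g y) = t x y)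
    (htnd : Function.Bijective t)
    (hVfin : Module.Finite R V) (hVproj : Module.Projective R V) :
    Nonempty (Module.Dual R ((ρV.tprod ρP).invariants) ≃ₗ[R]
      (Representation.invariants (V := Module.Dual R V ⊗[R] P) (ρV.dual.tprod ρP))) :=
  dual_of_twist_equiv_twist_of_dual_general ρP ρV hPprojG t htG htnd hVfin hVproj
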